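/- Let 𝓕 be an ω-closed family of nonempty inductive subsets of ω and let S = B_ω^𝓕 ∪ {0} be B_ω^𝓕 with an adjoined zero, equipped with a Hausdorff locally compact shift-continuous topology in which 0 is not an isolated point. Then for every neighbourhood U of 0 in S there exists F ∈ 𝓕 such that the set U ∩ B_ω^{F} is infinite. -/

import Mathlib

/-- For `n : ℕ` and `F ⊆ ω`, `wShift n F` is the set `(−n)+F = {x ∈ ω : x + n ∈ F}`. -/
def wShift (n : ℕ) (F : Set ℕ) : Set ℕ := {x | x + n ∈ F}

/-- A family `𝓕` of subsets of `ω` is ω-closed if `F₁ ∩ ((−n)+F₂) ∈ 𝓕`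
for all `n ∈ ω` and `F₁, F₂ ∈ 𝓕`. -/
def OmegaClosed (𝓕 : Set (Set ℕ)) : Prop :=
  ∀ n : ℕ, ∀ F₁ ∈ 𝓕, ∀ F₂ ∈ 𝓕, F₁ ∩ wShift n F₂ ∈ 𝓕

/-- A subset `F ⊆ ω` is inductive if `n ∈ F` implies `n+1 ∈ F`. -/
def InductiveSet (F : Set ℕ) : Prop := ∀ n : ℕ, n ∈ F → n + 1 ∈ F

/-- The underlying set `ω × ω × 𝓕` of the semigroup `B_ω^𝓕`. -/
abbrev BF (𝓕 : Set (Set ℕ)) : Type := ℕ × ℕ × {F : Set ℕ // F ∈ 𝓕}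

/-- The multiplication of the semigroup `B_ω^𝓕`:
`(i₁,j₁,F₁)·(i₂,j₂,F₂) = (i₁−j₁+i₂, j₂, ((j₁−i₂)+F₁) ∩ F₂)` if `j₁ ≤ i₂`, and
`(i₁, j₁−i₂+j₂, F₁ ∩ ((i₂−j₁)+F₂))` if `j₁ ≥ i₂`. -/
def BFmul {𝓕 : Set (Set ℕ)} (h : OmegaClosed 𝓕) (a b : BF 𝓕) : BF 𝓕 :=
  if a.2.1 ≤ b.1 then
    (a.1 + (b.1 - a.2.1), b.2.1,
      ⟨wShift (b.1 - a.2.1) a.2.2.1 ∩ b.2.2.1, by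
        rw [Set.inter_comm]; exact h _ _ b.2.2.2 _ a.2.2.2⟩)
  else
    (a.1, b.2.1 + (a.2.1 - b.1),
      ⟨a.2.2.1 ∩ wShift (a.2.1 - b.1) b.2.2.1, h _ _ a.2.2.2 _ b.2.2.2⟩)

/-- `B_ω^𝓕` with an adjoined zero; `none` plays the role of the zero `0`. -/
abbrev BF0 (𝓕 : Set (Set ℕ)) : Type := Option (BF 𝓕)

/-- The multiplication of the semigroup `B_ω^𝓕` with an adjoined zero. -/
def BF0mul {𝓕 : Set (Set ℕ)} (h : OmegaClosed 𝓕) : BF0 𝓕 → BF0 𝓕 → BF0 𝓕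
  | some a, some b => some (BFmul h a b)
  | _, _ => none


/-!
Every member of `𝓕` is `Ici (sInf F)`, so a point `(i, j, F)` is determined by `(i, j, sInf F)`,
and `𝓕` has a least member `F₀ = Ici a₀`. Fixed-point sets of the shifts `x ↦ e·x` and `x ↦ x·e`
are closed since the space is Hausdorff, and the points not fixed by the idempotents
`(i+1, i+1, F₀)`, `(j+1, j+1, F₀)` and `(0, 0, F)` (for a suitable `F`) have bounded coordinates;
so every nonzero point has a finite open neighbourhood and is isolated. Hence a compact
neighbourhood `K ⊆ U` of `0` is finite outside any open neighbourhood of `0`.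

Suppose every `U ∩ B_ω^{F}` is finite. As `K` is infinite, `sInf F` is unbounded on `K`. Left
multiplication by `(0, 1, F₀)` is continuous, fixes `0`, preserves the weight `j + sInf F` and
lowers the height `i + sInf F` as long as `F ≠ F₀`. Descending from a point of `K` one therefore
either leaves `K`, which happens only at finitely many points, or reaches the finite set
`K ∩ B_ω^{F₀}`: the weight takes finitely many values on `K`, a contradiction.
-/

open Set Filter Topology

theorem IsCompact.finite_sdiff_of_isOpen_singleton {X : Type*} [TopologicalSpace X] {K V : Set X}
    {x₀ : X} (hK : IsCompact K) (hV : IsOpen V) (hx₀ : x₀ ∈ V) (h : ∀ x ≠ x₀, IsOpen {x}) :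
    (K \ V).Finite :=
  (hK.diff hV).finite <| isDiscrete_iff_forall_mem_exists_isOpen.2 fun x hx =>
    ⟨{x}, h x fun hxx₀ => hx.2 (hxx₀ ▸ hx₀), by simpa using hx⟩

theorem image_subset_image_of_descent {X : Type*} {f : X → X} {K Z : Set X} {J μ : X → ℕ}
    (hstep : ∀ x ∈ K, x ∉ Z → J (f x) = J x ∧ μ (f x) < μ x) :
    J '' K ⊆ J '' (K \ f ⁻¹' K ∪ K ∩ Z) := by
  rintro _ ⟨x, hxK, rfl⟩
  induction hμ : μ x using Nat.strong_induction_on generalizing x with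
  | _ n ih =>
    by_cases hxZ : x ∈ Z
    · exact ⟨x, .inr ⟨hxK, hxZ⟩, rfl⟩
    by_cases hfx : f x ∈ K
    · obtain ⟨hJ, hμlt⟩ := hstep x hxK hxZ
      rw [← hJ]
      exact ih _ (hμ ▸ hμlt) _ hfx rfl
    · exact ⟨x, .inl ⟨hxK, hfx⟩, rfl⟩

theorem wShift_Ici (n k : ℕ) : wShift n (Ici k) = Ici (k - n) := by
  ext x; simp only [wShift, mem_Ici, mem_ofPred_eq]; omega

theorem Ici_subset_wShift_Ici_iff (k n g : ℕ) : Ici k ⊆ wShift n (Ici g) ↔ g ≤ k + n := by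
  rw [wShift_Ici, Ici_subset_Ici]; omega

theorem InductiveSet.eq_Ici_sInf {F : Set ℕ} (hF : InductiveSet F) (hne : F.Nonempty) :
    F = Ici (sInf F) := by
  refine Subset.antisymm (fun x hx => Nat.sInf_le hx) fun x hx => ?_
  obtain ⟨d, rfl⟩ := Nat.exists_eq_add_of_le (mem_Ici.1 hx)
  induction d with
  | zero => exact Nat.sInf_mem hne
  | succ d ih => exact hF _ (ih (by simp))

variable {𝓕 : Set (Set ℕ)} (hcl : OmegaClosed 𝓕)

theorem injective_sInf_of_eq_Ici (hIci : ∀ F ∈ 𝓕, F = Ici (sInf F)) :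
    Function.Injective fun F : {F // F ∈ 𝓕} => sInf F.1 := fun F G h =>
  Subtype.ext <| (hIci _ F.2).trans <| (congrArg Ici h).trans (hIci _ G.2).symm

theorem exists_Ici_mem_forall_le_sInf (hIci : ∀ F ∈ 𝓕, F = Ici (sInf F)) (h𝓕 : 𝓕.Nonempty) :
    ∃ a₀, Ici a₀ ∈ 𝓕 ∧ ∀ F ∈ 𝓕, a₀ ≤ sInf F := by
  obtain ⟨F₀, hF₀, hmin⟩ := Nat.sInf_mem (h𝓕.image sInf)
  exact ⟨_, hmin ▸ hIci F₀ hF₀ ▸ hF₀, fun F hF => Nat.sInf_le (mem_image_of_mem _ hF)⟩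

theorem finite_setOf_fst_le_snd_le_sInf_le (hIci : ∀ F ∈ 𝓕, F = Ici (sInf F)) (M N R : ℕ) :
    {b : BF 𝓕 | b.1 ≤ M ∧ b.2.1 ≤ N ∧ sInf b.2.2.1 ≤ R}.Finite := by
  have hinj : Function.Injective fun b : BF 𝓕 => (b.1, b.2.1, sInf b.2.2.1) := by
    rintro ⟨i, j, F⟩ ⟨i', j', F'⟩ h
    simp only [Prod.mk.injEq] at h
    obtain ⟨rfl, rfl, h⟩ := h
    rw [injective_sInf_of_eq_Ici hIci h]
  exact ((finite_Iic M).prod ((finite_Iic N).prod (finite_Iic R))).preimage hinj.injOn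

theorem BFmul_idempotent_left_eq_self_iff (m : ℕ) (G : {F // F ∈ 𝓕}) (b : BF 𝓕) :
    BFmul hcl (m, m, G) b = b ↔ m ≤ b.1 ∧ b.2.2.1 ⊆ wShift (b.1 - m) G.1 := by
  obtain ⟨i, j, F, hF⟩ := b
  unfold BFmul
  dsimp only
  split_ifs with h
  · simp [Prod.ext_iff, h]
  · simp only [Prod.ext_iff, Nat.add_eq_left, Subtype.mk.injEq, h, false_and, iff_false,
      not_and]
    omega

theorem BFmul_idempotent_right_eq_self_iff (m : ℕ) (G : {F // F ∈ 𝓕}) (b : BF 𝓕) :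
    BFmul hcl b (m, m, G) = b ↔ m ≤ b.2.1 ∧ b.2.2.1 ⊆ wShift (b.2.1 - m) G.1 := by
  obtain ⟨i, j, F, hF⟩ := b
  unfold BFmul
  dsimp only
  split_ifs with h
  · rcases eq_or_ne m j with rfl | hmj
    · simp [Prod.ext_iff, wShift]
    · simp only [Prod.ext_iff, Nat.add_eq_left, hmj, Subtype.mk.injEq, false_and, and_false,
        false_iff, not_and]
      omega
  · simp only [Prod.ext_iff, Subtype.mk.injEq, inter_eq_left, true_and, and_congr_left_iff]
    omega

theorem BFmul_zero_zero_eq_self_iff (hIci : ∀ F ∈ 𝓕, F = Ici (sInf F)) (G : {F // F ∈ 𝓕})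
    (b : BF 𝓕) : BFmul hcl (0, 0, G) b = b ↔ sInf G.1 ≤ sInf b.2.2.1 + b.1 := by
  rw [BFmul_idempotent_left_eq_self_iff, hIci _ b.2.2.2, hIci _ G.2, Ici_subset_wShift_Ici_iff]
  simp

noncomputable def BF.weight (b : BF 𝓕) : ℕ := b.2.1 + sInf b.2.2.1

noncomputable def BF.height (b : BF 𝓕) : ℕ := b.1 + sInf b.2.2.1

section Bottom

variable {a₀ : ℕ} (ha₀ : Ici a₀ ∈ 𝓕)

theorem BFmul_bottom_left_eq_self_iff (hIci : ∀ F ∈ 𝓕, F = Ici (sInf F)) (m : ℕ) (b : BF 𝓕)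
    (hb : a₀ ≤ sInf b.2.2.1) : BFmul hcl (m, m, ⟨Ici a₀, ha₀⟩) b = b ↔ m ≤ b.1 := by
  rw [BFmul_idempotent_left_eq_self_iff, hIci _ b.2.2.2, Ici_subset_wShift_Ici_iff]
  omega

theorem BFmul_bottom_right_eq_self_iff (hIci : ∀ F ∈ 𝓕, F = Ici (sInf F)) (m : ℕ) (b : BF 𝓕)
    (hb : a₀ ≤ sInf b.2.2.1) : BFmul hcl b (m, m, ⟨Ici a₀, ha₀⟩) = b ↔ m ≤ b.2.1 := by
  rw [BFmul_idempotent_right_eq_self_iff, hIci _ b.2.2.2, Ici_subset_wShift_Ici_iff]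
  omega

theorem weight_BFmul_shift_eq_and_height_lt (hIci : ∀ F ∈ 𝓕, F = Ici (sInf F)) (b : BF 𝓕)
    (hb : a₀ < sInf b.2.2.1) :
    (BFmul hcl (0, 1, ⟨Ici a₀, ha₀⟩) b).weight = b.weight ∧
      (BFmul hcl (0, 1, ⟨Ici a₀, ha₀⟩) b).height < b.height := by
  obtain ⟨i, j, F, hF⟩ := b
  obtain ⟨k, rfl⟩ : ∃ k, F = Ici k := ⟨_, hIci F hF⟩
  simp only [csInf_Ici] at hb
  unfold BFmul BF.weight BF.height
  dsimp only
  split_ifs <;> simp only [wShift_Ici, Ici_inter_Ici, csInf_Ici] <;> omega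

theorem finite_inter_setOf_sInf_le (hIci : ∀ F ∈ 𝓕, F = Ici (sInf F))
    (hbot : ∀ F ∈ 𝓕, a₀ ≤ sInf F) {U K : Set (BF0 𝓕)} (hKU : K ⊆ U)
    (hfin : (U ∩ {x | ∃ i j : ℕ, x = some (i, j, ⟨Ici a₀, ha₀⟩)}).Finite) :
    (K ∩ {x | ∀ p ∈ x, sInf p.2.2.1 ≤ a₀}).Finite := by
  refine (hfin.insert none).subset ?_
  rintro (_ | ⟨i, j, F⟩) ⟨hxK, hxZ⟩
  · exact mem_insert _ _
  · have hF : F = ⟨Ici a₀, ha₀⟩ := injective_sInf_of_eq_Ici hIci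
      (show sInf F.1 = sInf (Ici a₀) by rw [csInf_Ici]; exact (hxZ _ rfl).antisymm (hbot _ F.2))
    exact mem_insert_of_mem _ ⟨hKU hxK, i, j, hF ▸ rfl⟩

end Bottom

theorem exists_some_mem_lt_sInf (hIci : ∀ F ∈ 𝓕, F = Ici (sInf F)) {U K : Set (BF0 𝓕)}
    (hKU : K ⊆ U) (hK : K.Infinite)
    (hfin : ∀ F : {F // F ∈ 𝓕}, (U ∩ {x | ∃ i j : ℕ, x = some (i, j, F)}).Finite) (N : ℕ) :
    ∃ b, some b ∈ K ∧ N < sInf b.2.2.1 := by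
  by_contra! h
  refine hK.sdiff (finite_singleton none) <|
    (((finite_Iic N).preimage (injective_sInf_of_eq_Ici hIci).injOn).biUnion
      fun F _ => hfin F).subset ?_
  rintro (_ | ⟨i, j, F⟩) ⟨hxK, hx⟩
  · exact absurd rfl hx
  · exact mem_biUnion (x := F) (h _ hxK) ⟨hKU hxK, i, j, rfl⟩

section Topology

variable [TopologicalSpace (BF0 𝓕)] [T2Space (BF0 𝓕)]

theorem exists_isOpen_forall_sInf_le (hleft : ∀ a, Continuous (BF0mul hcl a))
    (hIci : ∀ F ∈ 𝓕, F = Ici (sInf F)) (p : BF 𝓕) :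
    ∃ W : Set (BF0 𝓕), IsOpen W ∧ some p ∈ W ∧ ∃ R, ∀ b, some b ∈ W → sInf b.2.2.1 ≤ R := by
  by_cases h : ∃ F ∈ 𝓕, sInf p.2.2.1 + p.1 < sInf F
  · obtain ⟨F, hF, hlt⟩ := h
    refine ⟨{x | BF0mul hcl (some (0, 0, ⟨F, hF⟩)) x = x}ᶜ,
      (isClosed_eq (hleft _) continuous_id).isOpen_compl, ?_, sInf F, fun b hb => ?_⟩
    all_goals simp only [mem_compl_iff, mem_ofPred_eq, BF0mul, Option.some_inj,
      BFmul_zero_zero_eq_self_iff hcl hIci] at *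
    all_goals omega
  · push Not at h
    exact ⟨univ, isOpen_univ, mem_univ _, _, fun b _ => h _ b.2.2.2⟩

theorem isOpen_singleton_some (hleft : ∀ a, Continuous (BF0mul hcl a))
    (hright : ∀ a, Continuous fun x => BF0mul hcl x a) (hIci : ∀ F ∈ 𝓕, F = Ici (sInf F))
    {a₀ : ℕ} (ha₀ : Ici a₀ ∈ 𝓕) (hbot : ∀ F ∈ 𝓕, a₀ ≤ sInf F) (p : BF 𝓕) :
    IsOpen {some p} := by
  obtain ⟨W, hWo, hpW, R, hR⟩ := exists_isOpen_forall_sInf_le hcl hleft hIci p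
  set eL : BF0 𝓕 := some (p.1 + 1, p.1 + 1, ⟨Ici a₀, ha₀⟩)
  set eR : BF0 𝓕 := some (p.2.1 + 1, p.2.1 + 1, ⟨Ici a₀, ha₀⟩)
  let V := {x | BF0mul hcl eL x = x}ᶜ ∩ {x | BF0mul hcl x eR = x}ᶜ ∩ W
  have hVo : IsOpen V := ((isClosed_eq (hleft eL) continuous_id).isOpen_compl.inter
    (isClosed_eq (hright eR) continuous_id).isOpen_compl).inter hWo
  refine isOpen_singleton_of_finite_mem_nhds _ (hVo.mem_nhds ?_) ?_
  · simp only [V, eL, eR, mem_inter_iff, mem_compl_iff, mem_ofPred_eq, BF0mul, Option.some_inj,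
      BFmul_bottom_left_eq_self_iff hcl ha₀ hIci _ _ (hbot _ p.2.2.2),
      BFmul_bottom_right_eq_self_iff hcl ha₀ hIci _ _ (hbot _ p.2.2.2)]
    exact ⟨⟨by omega, by omega⟩, hpW⟩
  · refine ((finite_setOf_fst_le_snd_le_sInf_le hIci p.1 p.2.1 R).image some).subset ?_
    rintro (_ | b) ⟨⟨hbL, hbR⟩, hbW⟩
    · exact absurd rfl hbL
    · simp only [eL, eR, mem_compl_iff, mem_ofPred_eq, BF0mul, Option.some_inj,
        BFmul_bottom_left_eq_self_iff hcl ha₀ hIci _ _ (hbot _ b.2.2.2),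
        BFmul_bottom_right_eq_self_iff hcl ha₀ hIci _ _ (hbot _ b.2.2.2)] at hbL hbR
      exact ⟨b, ⟨by omega, by omega, hR b hbW⟩, rfl⟩

end Topology

/-- Lemma 3.2: if `S = B_ω^𝓕 ∪ {0}` carries a Hausdorff locally compact
shift-continuous topology with nonisolated zero, then every neighbourhood `U` of
the zero meets some `B_ω^{F} = {(i,j,F) : i,j ∈ ω}`, `F ∈ 𝓕`, in an infinite set. -/
theorem statement6 (𝓕 : Set (Set ℕ)) (hcl : OmegaClosed 𝓕)
    (hne : ∀ F ∈ 𝓕, F.Nonempty) (hind : ∀ F ∈ 𝓕, InductiveSet F)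
    (τ : TopologicalSpace (BF0 𝓕)) (hT2 : @T2Space _ τ)
    (hlc : @LocallyCompactSpace _ τ)
    (hsc : ∀ a : BF0 𝓕, @Continuous _ _ τ τ (fun x => BF0mul hcl a x) ∧
        @Continuous _ _ τ τ (fun x => BF0mul hcl x a))
    (hni : ¬ @IsOpen _ τ {(none : BF0 𝓕)})
    (U : Set (BF0 𝓕)) (hU : U ∈ @nhds _ τ none) :
    ∃ F : Set ℕ, ∃ hF : F ∈ 𝓕,
      (U ∩ {x : BF0 𝓕 | ∃ i j : ℕ, x = some (i, j, ⟨F, hF⟩)}).Infinite := by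
  have hIci : ∀ F ∈ 𝓕, F = Ici (sInf F) := fun F hF => (hind F hF).eq_Ici_sInf (hne F hF)
  by_contra! hfin
  have : NeBot (𝓝[≠] (none : BF0 𝓕)) :=
    ⟨fun h => hni ((isOpen_singleton_iff_punctured_nhds _).2 h)⟩
  obtain ⟨K, hK, hKU, hKc⟩ := local_compact_nhds hU
  have hKinf : K.Infinite := infinite_of_mem_nhds none hK
  obtain ⟨_ | b, -, hb⟩ := (hKinf.sdiff (finite_singleton none)).nonempty
  · exact hb rfl
  obtain ⟨a₀, ha₀, hbot⟩ := exists_Ici_mem_forall_le_sInf hIci ⟨_, b.2.2.2⟩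
  let G := BF0mul hcl (some (0, 1, ⟨Ici a₀, ha₀⟩))
  have hiso : ∀ x ≠ none, IsOpen {x} := fun x hx => by
    obtain ⟨p, rfl⟩ := Option.ne_none_iff_exists'.1 hx
    exact isOpen_singleton_some hcl (fun a => (hsc a).1) (fun a => (hsc a).2) hIci ha₀ hbot p
  have hexit : (K \ G ⁻¹' K).Finite :=
    (hKc.finite_sdiff_of_isOpen_singleton (isOpen_interior.preimage (hsc _).1) (x₀ := none)
      (mem_interior_iff_mem_nhds.2 hK) hiso).subset
      (sdiff_subset_sdiff_right (preimage_mono interior_subset))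
  have hbottom := finite_inter_setOf_sInf_le ha₀ hIci hbot hKU (hfin _ ha₀)
  let J : BF0 𝓕 → ℕ := fun x => x.elim 0 BF.weight
  obtain ⟨N, hN⟩ := ((hexit.union hbottom).image J).bddAbove
  obtain ⟨p, hpK, hp⟩ := exists_some_mem_lt_sInf hIci hKU hKinf (fun F => hfin F.1 F.2) N
  have hpN : J (some p) ≤ N := hN <| image_subset_image_of_descent (f := G)
    (μ := fun x => x.elim 0 BF.height) ?_ ⟨_, hpK, rfl⟩
  · simp only [J, Option.elim_some, BF.weight] at hpN
    omega
  rintro (_ | q) - hq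
  · exact absurd (fun _ h => nomatch h) hq
  · exact weight_BFmul_shift_eq_and_height_lt hcl ha₀ hIci q <|
      not_le.1 fun h => hq fun _ hp => Option.some_inj.1 hp ▸ h
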